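/- arXiv:2512.09822 — 3 statements merged into one kernel-verified Lean document; each statement's English description precedes it below -/
import Mathlib

section
/- For a tree T with edge (x,y), the 1-Wasserstein distance between the uniform measure on the neighbors of x excluding y (p points) and the uniform measure on the neighbors of y excluding x (q points) equals (1/p)·Σᵢ d_T(xᵢ,x) + d_T(x,y) + (1/q)·Σⱼ d_T(y,yⱼ). -/
/-- Total weight of a walk: the sum of `w u v` over the consecutive edges of the walk. -/
def walkWeight {V : Type*} {G : SimpleGraph V} (w : V → V → ℝ) :
    {u v : V} → G.Walk u v → ℝ
  | _, _, SimpleGraph.Walk.nil => 0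
  | u, _, SimpleGraph.Walk.cons (v := b) _ q => w u b + walkWeight w q

/-- Weighted geodesic distance: infimum of walk weights over all walks from `u` to `v`. -/
noncomputable def wdist {V : Type*} (G : SimpleGraph V) (w : V → V → ℝ) (u v : V) : ℝ :=
  sInf {c : ℝ | ∃ q : G.Walk u v, walkWeight w q = c}

/-!
In a tree, the geodesic from a neighbour `xᵢ` of `x` to a neighbour `yⱼ` of `y` is the path
`xᵢ x y yⱼ` (no triangles), so the cost is additive, `d(xᵢ, yⱼ) = a i + b j`. The cost of any
coupling of an additive cost is determined by the marginals alone, so every coupling, in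
particular the product one, is optimal and has the stated cost.
-/

open Finset

section Coupling

variable {ι κ : Type*} [Fintype ι] [Fintype κ]

theorem sum_sum_add_mul_eq_of_marginals (a : ι → ℝ) (b : κ → ℝ) {μ : ι → ℝ} {ν : κ → ℝ}
    {γ : ι → κ → ℝ} (hrow : ∀ i, ∑ j, γ i j = μ i) (hcol : ∀ j, ∑ i, γ i j = ν j) :
    ∑ i, ∑ j, (a i + b j) * γ i j = ∑ i, a i * μ i + ∑ j, b j * ν j := by
  simp only [add_mul, sum_add_distrib]
  rw [sum_comm (f := fun i j => b j * γ i j)]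
  simp only [← mul_sum, hrow, hcol]

theorem isLeast_couplingCost_of_additive (a : ι → ℝ) (b : κ → ℝ) {μ : ι → ℝ} {ν : κ → ℝ}
    (hμ : ∀ i, 0 ≤ μ i) (hν : ∀ j, 0 ≤ ν j) (hμ1 : ∑ i, μ i = 1) (hν1 : ∑ j, ν j = 1) :
    IsLeast {c : ℝ | ∃ γ : ι → κ → ℝ,
        (∀ i j, 0 ≤ γ i j) ∧ (∀ i, ∑ j, γ i j = μ i) ∧ (∀ j, ∑ i, γ i j = ν j) ∧
        ∑ i, ∑ j, (a i + b j) * γ i j = c}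
      (∑ i, a i * μ i + ∑ j, b j * ν j) := by
  have hrow : ∀ i, ∑ j, μ i * ν j = μ i := fun i => by rw [← mul_sum, hν1, mul_one]
  have hcol : ∀ j, ∑ i, μ i * ν j = ν j := fun j => by rw [← sum_mul, hμ1, one_mul]
  refine ⟨⟨fun i j => μ i * ν j, fun i j => mul_nonneg (hμ i) (hν j), hrow, hcol,
    sum_sum_add_mul_eq_of_marginals a b hrow hcol⟩, ?_⟩
  rintro c ⟨γ, -, hγrow, hγcol, rfl⟩
  exact (sum_sum_add_mul_eq_of_marginals a b hγrow hγcol).ge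

end Coupling

theorem SimpleGraph.IsAcyclic.not_adj_of_adj_of_adj {V : Type*} {G : SimpleGraph V}
    (hG : G.IsAcyclic) {x y z : V} (hxy : G.Adj x y) (hxz : G.Adj x z) : ¬ G.Adj y z :=
  fun hyz => by
    classical
    exact hG.cliqueFree le_rfl {x, y, z} (is3Clique_triple_iff.mpr ⟨hxy, hxz, hyz⟩)

section WeightedDistance

variable {V : Type*} {G : SimpleGraph V} {w : V → V → ℝ} {u v : V}

theorem walkWeight_eq_sum_darts (q : G.Walk u v) :
    walkWeight w q = (q.darts.map fun d => w d.fst d.snd).sum := by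
  induction q with
  | nil => rfl
  | cons _ q ih => simp [walkWeight, ih]

theorem walkWeight_bypass_le [DecidableEq V] (hw : ∀ u v, G.Adj u v → 0 ≤ w u v)
    (q : G.Walk u v) : walkWeight w q.bypass ≤ walkWeight w q := by
  simp only [walkWeight_eq_sum_darts]
  refine (q.darts_bypass_sublist_darts.map _).sum_le_sum ?_
  simp only [List.mem_map]
  rintro _ ⟨d, -, rfl⟩
  exact hw _ _ d.adj

theorem wdist_eq_walkWeight_of_isPath (hG : G.IsAcyclic) (hw : ∀ u v, G.Adj u v → 0 ≤ w u v)
    {P : G.Walk u v} (hP : P.IsPath) : wdist G w u v = walkWeight w P := by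
  classical
  have hmin : ∀ q : G.Walk u v, walkWeight w P ≤ walkWeight w q := fun q => by
    have hPq : P = q.bypass :=
      congrArg Subtype.val ((hG.subsingleton_path u v).elim ⟨P, hP⟩ ⟨_, q.bypass_isPath⟩)
    exact hPq ▸ walkWeight_bypass_le hw q
  refine le_antisymm (csInf_le ⟨walkWeight w P, ?_⟩ ⟨P, rfl⟩) (le_csInf ⟨_, P, rfl⟩ ?_) <;>
    rintro _ ⟨q, rfl⟩ <;> exact hmin q

theorem wdist_eq_of_adj (hG : G.IsAcyclic) (hw : ∀ u v, G.Adj u v → 0 ≤ w u v)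
    (h : G.Adj u v) : wdist G w u v = w u v := by
  rw [wdist_eq_walkWeight_of_isPath hG hw (P := .cons h .nil) (by simp [h.ne])]
  simp [walkWeight]

end WeightedDistance

theorem tree_wasserstein_general {V : Type*} (T : SimpleGraph V) (hT : T.IsTree)
    (w : V → V → ℝ) (hw : ∀ u v, T.Adj u v → 0 < w u v)
    (x y : V) (hxy : T.Adj x y)
    (p q : ℕ) (hp : 0 < p) (hq : 0 < q)
    (xs : Fin p → V) (ys : Fin q → V)
    (hxsadj : ∀ i, T.Adj x (xs i)) (hxsne : ∀ i, xs i ≠ y)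
    (hysadj : ∀ j, T.Adj y (ys j)) (hysne : ∀ j, ys j ≠ x) :
    IsLeast {c : ℝ | ∃ γ : Fin p → Fin q → ℝ,
        (∀ i j, 0 ≤ γ i j) ∧ (∀ i, ∑ j, γ i j = 1 / p) ∧ (∀ j, ∑ i, γ i j = 1 / q) ∧
        ∑ i, ∑ j, wdist T w (xs i) (ys j) * γ i j = c}
      ((1 / p) * ∑ i, wdist T w (xs i) x + wdist T w x y
        + (1 / q) * ∑ j, wdist T w y (ys j)) := by
  have hG := hT.isAcyclic
  have hw' : ∀ u v, T.Adj u v → 0 ≤ w u v := fun u v h => (hw u v h).le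
  have hsplit : ∀ i j, wdist T w (xs i) (ys j)
      = (wdist T w (xs i) x + wdist T w x y) + wdist T w y (ys j) := fun i j => by
    have hne : xs i ≠ ys j := fun h => hG.not_adj_of_adj_of_adj hxy (hxsadj i) (h ▸ hysadj j)
    rw [wdist_eq_of_adj hG hw' (hxsadj i).symm, wdist_eq_of_adj hG hw' hxy,
      wdist_eq_of_adj hG hw' (hysadj j), wdist_eq_walkWeight_of_isPath hG hw'
        (P := .cons (hxsadj i).symm (.cons hxy (.cons (hysadj j) .nil)))
        (by simp [(hxsadj i).ne', hxsne i, hne, hxy.ne, (hysne j).symm, (hysadj j).ne])]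
    simp [walkWeight, add_assoc]
  have huniform : ∀ n : ℕ, 0 < n → ∑ _ : Fin n, (1 / n : ℝ) = 1 := fun n hn => by
    simp [(Nat.cast_pos.mpr hn).ne']
  have hopt := isLeast_couplingCost_of_additive (fun i => wdist T w (xs i) x + wdist T w x y)
    (fun j => wdist T w y (ys j)) (fun _ => by positivity) (fun _ => by positivity)
    (huniform p hp) (huniform q hq)
  simp only [← hsplit, ← sum_mul, sum_add_distrib, sum_const, card_univ, Fintype.card_fin,
    nsmul_eq_mul] at hopt
  convert hopt using 1
  field_simp

/-- For a tree `T` with edge `(x,y)`, the 1-Wasserstein distance between the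
uniform measure on the `p` neighbors of `x` (excluding `y`) and the uniform measure on the
`q` neighbors of `y` (excluding `x`) equals
`(1/p)·Σᵢ d_T(xᵢ,x) + d_T(x,y) + (1/q)·Σⱼ d_T(y,yⱼ)`. -/
theorem tree_wasserstein {V : Type*} (T : SimpleGraph V) (hT : T.IsTree)
    (w : V → V → ℝ) (hw : ∀ u v, T.Adj u v → 0 < w u v) (hsymm : ∀ u v, w u v = w v u)
    (x y : V) (hxy : T.Adj x y)
    (p q : ℕ) (hp : 0 < p) (hq : 0 < q)
    (xs : Fin p → V) (ys : Fin q → V)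
    (hxs : Function.Injective xs) (hys : Function.Injective ys)
    (hxsadj : ∀ i, T.Adj x (xs i)) (hxsne : ∀ i, xs i ≠ y)
    (hysadj : ∀ j, T.Adj y (ys j)) (hysne : ∀ j, ys j ≠ x) :
    IsLeast {c : ℝ | ∃ γ : Fin p → Fin q → ℝ,
        (∀ i j, 0 ≤ γ i j) ∧ (∀ i, ∑ j, γ i j = 1 / p) ∧ (∀ j, ∑ i, γ i j = 1 / q) ∧
        ∑ i, ∑ j, wdist T w (xs i) (ys j) * γ i j = c}
      ((1 / p) * ∑ i, wdist T w (xs i) x + wdist T w x y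
        + (1 / q) * ∑ j, wdist T w y (ys j)) :=
  tree_wasserstein_general T hT w hw x y hxy p q hp hq xs ys hxsadj hxsne hysadj hysne
end

section
/- When p = q, the 1-Wasserstein distance between uniform distributions on p sources and p targets with cost matrix d_G equals (1/p)·min over permutations π of Fin p of Σᵢ d_G(x_{π(i)}, y_i). -/
/-- When `p = q`, the 1-Wasserstein distance between uniform distributions on `p`
sources and `p` targets with cost matrix `d_G` equals `(1/p)` times the minimum over
permutations `π` of `Σᵢ d_G(x_{π(i)}, y_i)`. -/
theorem wasserstein_eq_min_perm (p : ℕ) (hp : 0 < p)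
    (dG : Fin p → Fin p → ℝ) (hd : ∀ i j, 0 ≤ dG i j) :
    IsLeast {c : ℝ | ∃ γ : Fin p → Fin p → ℝ,
        (∀ i j, 0 ≤ γ i j) ∧ (∀ j, ∑ i, γ i j = 1 / p) ∧ (∀ i, ∑ j, γ i j = 1 / p) ∧
        ∑ i, ∑ j, dG i j * γ i j = c}
      ((1 / p) * Finset.univ.inf' Finset.univ_nonempty
        (fun π : Equiv.Perm (Fin p) => ∑ i, dG (π i) i)) := by
  classical
  have hp0 : (p : ℝ) ≠ 0 := Nat.cast_ne_zero.mpr hp.ne'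
  set m : ℝ := Finset.univ.inf' Finset.univ_nonempty
      (fun π : Equiv.Perm (Fin p) => ∑ i, dG (π i) i) with hm
  constructor
  · -- membership
    obtain ⟨π₀, -, hπ₀⟩ := Finset.exists_mem_eq_inf' (Finset.univ_nonempty)
        (fun π : Equiv.Perm (Fin p) => ∑ i, dG (π i) i)
    refine ⟨fun i j => if i = π₀ j then (1:ℝ) / p else 0, ?_, ?_, ?_, ?_⟩
    · intro i j; positivity
    · intro j; simp
    · intro i
      have : ∀ j : Fin p, (if i = π₀ j then (1:ℝ) / p else 0)
          = if π₀.symm i = j then (1:ℝ) / p else 0 := by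
        intro j; congr 1
        rw [eq_iff_iff]; exact (Equiv.symm_apply_eq π₀).symm
      rw [Finset.sum_congr rfl fun j _ => this j]; simp
    · rw [Finset.sum_comm]
      have : ∀ j : Fin p, ∑ i, dG i j * (if i = π₀ j then (1:ℝ) / p else 0)
          = dG (π₀ j) j * (1 / p) := by
        intro j; simp
      rw [Finset.sum_congr rfl fun j _ => this j, hm, hπ₀, ← Finset.sum_mul]
      ring
  · -- lower bound
    rintro c ⟨γ, hpos, hcol, hrow, rfl⟩
    set M : Matrix (Fin p) (Fin p) ℝ := Matrix.of fun i j => (p : ℝ) * γ i j with hMdef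
    have hM : M ∈ doublyStochastic ℝ (Fin p) := by
      rw [mem_doublyStochastic_iff_sum]
      refine ⟨fun i j => ?_, fun i => ?_, fun j => ?_⟩
      · simp only [hMdef, Matrix.of_apply]
        exact mul_nonneg (by positivity) (hpos i j)
      · simp only [hMdef, Matrix.of_apply, ← Finset.mul_sum, hrow i]
        field_simp
      · simp only [hMdef, Matrix.of_apply, ← Finset.mul_sum, hcol j]
        field_simp
    rw [← SetLike.mem_coe, doublyStochastic_eq_convexHull_permMatrix] at hM
    have hlin : IsLinearMap ℝ (fun N : Matrix (Fin p) (Fin p) ℝ => ∑ i, ∑ j, dG i j * N i j) := by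
      constructor
      · intro x y; simp [Matrix.add_apply, mul_add, Finset.sum_add_distrib]
      · intro c x
        simp only [Matrix.smul_apply, smul_eq_mul, Finset.mul_sum]
        congr 1; ext i; congr 1; ext j; ring
    have hconv : Convex ℝ {N : Matrix (Fin p) (Fin p) ℝ | m ≤ ∑ i, ∑ j, dG i j * N i j} :=
      convex_halfSpace_ge hlin m
    have hsub : {σ.permMatrix ℝ | σ : Equiv.Perm (Fin p)} ⊆
        {N : Matrix (Fin p) (Fin p) ℝ | m ≤ ∑ i, ∑ j, dG i j * N i j} := by
      rintro _ ⟨σ, rfl⟩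
      have hval : ∑ i, ∑ j, dG i j * (σ.permMatrix ℝ) i j = ∑ i, dG i (σ i) := by
        refine Finset.sum_congr rfl fun i _ => ?_
        simp [Equiv.Perm.permMatrix, PEquiv.toMatrix, Equiv.toPEquiv, eq_comm]
      rw [Set.mem_setOf_eq, hval]
      have : ∑ i, dG i (σ i) = ∑ i, dG (σ.symm i) i := by
        rw [← Equiv.sum_comp σ (fun i => dG (σ.symm i) i)]
        simp
      rw [this]
      exact Finset.inf'_le _ (Finset.mem_univ σ.symm)
    have hMm : m ≤ ∑ i, ∑ j, dG i j * M i j := convexHull_min hsub hconv hM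
    have hMval : ∑ i, ∑ j, dG i j * M i j = p * ∑ i, ∑ j, dG i j * γ i j := by
      simp only [hMdef, Matrix.of_apply, Finset.mul_sum]
      congr 1; ext i; congr 1; ext j; ring
    rw [hMval] at hMm
    rw [div_mul_eq_mul_div, one_mul, div_le_iff₀ (by positivity)]
    linarith [hMm]
end

section
/- If U₁ is an exact block encoding of A₁ with ancilla register of dimension a₁ and U₂ is an exact block encoding of A₂ with ancilla register of dimension a₂, then the product (I_{a₂} ⊗ U₁)(U₂ extended to act on the combined space appropriately) yields a unitary that is an exact block encoding of A₁A₂ with ancilla dimension a₁·a₂. -/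
/-!
Each extended unitary is `I ⊗ U` written in a permuted basis, hence unitary. In the top-left
block of the product, `U₂` leaves the first ancilla in `z₁` and `U₁` leaves the second in `z₂`,
so the only surviving intermediate ancilla state is `(z₁, z₂)` and the block factors as
`(⟨z₁|U₁|z₁⟩)(⟨z₂|U₂|z₂⟩) = A₁A₂`.
-/

open Matrix Kronecker

namespace Matrix

variable {l m α : Type*} [Fintype l] [Fintype m] [DecidableEq l] [DecidableEq m]
  [CommRing α] [StarRing α]

theorem submatrix_equiv_mem_unitaryGroup {U : Matrix m m α} (hU : U ∈ unitaryGroup m α)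
    (e : l ≃ m) : U.submatrix e e ∈ unitaryGroup l α := by
  rw [mem_unitaryGroup_iff, star_eq_conjTranspose, conjTranspose_submatrix,
    submatrix_mul_equiv, ← star_eq_conjTranspose, mem_unitaryGroup_iff.mp hU,
    submatrix_one_equiv]

end Matrix

namespace BlockEncoding

variable {a b n R : Type*}

/-- The isometry `|z⟩ ⊗ I_n` preparing the ancilla in the state `z`. -/
def ancillaInclusion [DecidableEq a] [DecidableEq n] [Zero R] [One R] (z : a) :
    Matrix (a × n) n R :=
  of fun i j => if i = (z, j) then 1 else 0

variable (b) in
def onFstAncilla [DecidableEq b] [Zero R] [One R] [Mul R] (U : Matrix (a × n) (a × n) R) :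
    Matrix ((a × b) × n) ((a × b) × n) R :=
  fun i j => (if i.1.2 = j.1.2 then 1 else 0) * U (i.1.1, i.2) (j.1.1, j.2)

variable (b) in
def onSndAncilla [DecidableEq b] [Zero R] [One R] [Mul R] (U : Matrix (a × n) (a × n) R) :
    Matrix ((b × a) × n) ((b × a) × n) R :=
  fun i j => (if i.1.1 = j.1.1 then 1 else 0) * U (i.1.2, i.2) (j.1.2, j.2)

section Compression

variable [DecidableEq a] [DecidableEq n] [Fintype a] [Fintype n] [Semiring R]

theorem conjTranspose_ancillaInclusion_mul [StarRing R] {m : Type*} (M : Matrix (a × n) m R)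
    (z : a) : (ancillaInclusion z : Matrix (a × n) n R)ᴴ * M = M.submatrix (Prod.mk z) id := by
  ext s j
  simp [ancillaInclusion, mul_apply, apply_ite star]

theorem mul_ancillaInclusion {m : Type*} [Fintype m] (M : Matrix m (a × n) R) (z : a) :
    M * (ancillaInclusion z : Matrix (a × n) n R) = M.submatrix id (Prod.mk z) := by
  ext i t
  simp [mul_apply, ancillaInclusion]

theorem conjTranspose_ancillaInclusion_mul_mul_ancillaInclusion [StarRing R]
    (U : Matrix (a × n) (a × n) R) (z : a) :
    (ancillaInclusion z : Matrix (a × n) n R)ᴴ * U * (ancillaInclusion z : Matrix (a × n) n R) =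
      U.submatrix (Prod.mk z) (Prod.mk z) := by
  rw [conjTranspose_ancillaInclusion_mul, mul_ancillaInclusion]
  rfl

end Compression

section Unitary

variable [DecidableEq a] [DecidableEq b] [DecidableEq n] [Fintype a] [Fintype b] [Fintype n]
  [CommRing R] [StarRing R]

theorem onSndAncilla_mem_unitaryGroup {U : Matrix (a × n) (a × n) R}
    (hU : U ∈ unitaryGroup (a × n) R) : onSndAncilla b U ∈ unitaryGroup ((b × a) × n) R :=
  submatrix_equiv_mem_unitaryGroup (kronecker_mem_unitary (one_mem _) hU) (Equiv.prodAssoc b a n)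

/-- `onFstAncilla b U` is, by definition, `onSndAncilla b U` with the two ancillas swapped. -/
theorem onFstAncilla_mem_unitaryGroup {U : Matrix (a × n) (a × n) R}
    (hU : U ∈ unitaryGroup (a × n) R) : onFstAncilla b U ∈ unitaryGroup ((a × b) × n) R :=
  submatrix_equiv_mem_unitaryGroup (onSndAncilla_mem_unitaryGroup hU)
    ((Equiv.prodComm a b).prodCongr (Equiv.refl n))

end Unitary

theorem onFstAncilla_mul_onSndAncilla_submatrix [DecidableEq a] [DecidableEq b]
    [Fintype a] [Fintype b] [Fintype n] [Semiring R]
    (U₁ : Matrix (a × n) (a × n) R) (U₂ : Matrix (b × n) (b × n) R) (z₁ : a) (z₂ : b) :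
    (onFstAncilla b U₁ * onSndAncilla a U₂).submatrix (Prod.mk (z₁, z₂)) (Prod.mk (z₁, z₂)) =
      U₁.submatrix (Prod.mk z₁) (Prod.mk z₁) * U₂.submatrix (Prod.mk z₂) (Prod.mk z₂) := by
  ext s t
  simp [mul_apply, onFstAncilla, onSndAncilla, Fintype.sum_prod_type, ite_mul]

end BlockEncoding

open BlockEncoding

/-- If `U₁` block-encodes `A₁` (ancilla `a₁`) and `U₂` block-encodes `A₂`
(ancilla `a₂`), then the product of `U₁` (acting on ancilla-1 and the system) with `U₂`
(acting on ancilla-2 and the system), both extended by the identity on the other ancilla,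
is a unitary that exactly block-encodes `A₁A₂` with ancilla dimension `a₁·a₂`. -/
theorem block_encoding_product
    {a₁ a₂ n : Type*} [Fintype a₁] [Fintype a₂] [Fintype n]
    [DecidableEq a₁] [DecidableEq a₂] [DecidableEq n]
    (U₁ : Matrix (a₁ × n) (a₁ × n) ℂ) (hU₁ : U₁ ∈ Matrix.unitaryGroup (a₁ × n) ℂ)
    (U₂ : Matrix (a₂ × n) (a₂ × n) ℂ) (hU₂ : U₂ ∈ Matrix.unitaryGroup (a₂ × n) ℂ)
    (z₁ : a₁) (z₂ : a₂)
    (B₁ : Matrix (a₁ × n) n ℂ) (hB₁ : B₁ = fun i j => if i = (z₁, j) then 1 else 0)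
    (B₂ : Matrix (a₂ × n) n ℂ) (hB₂ : B₂ = fun i j => if i = (z₂, j) then 1 else 0)
    (A₁ A₂ : Matrix n n ℂ) (hA₁ : A₁ = B₁ᴴ * U₁ * B₁) (hA₂ : A₂ = B₂ᴴ * U₂ * B₂)
    -- `U₁` extended to act on ancilla-1 and the system, identity on ancilla-2:
    (M₁ : Matrix ((a₁ × a₂) × n) ((a₁ × a₂) × n) ℂ)
    (hM₁ : M₁ = fun i j =>
      (if i.1.2 = j.1.2 then (1 : ℂ) else 0) * U₁ (i.1.1, i.2) (j.1.1, j.2))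
    -- `U₂` extended to act on ancilla-2 and the system, identity on ancilla-1:
    (M₂ : Matrix ((a₁ × a₂) × n) ((a₁ × a₂) × n) ℂ)
    (hM₂ : M₂ = fun i j =>
      (if i.1.1 = j.1.1 then (1 : ℂ) else 0) * U₂ (i.1.2, i.2) (j.1.2, j.2))
    -- combined ancilla zero state `|0⟩_{a₁} ⊗ |0⟩_{a₂}`:
    (B : Matrix ((a₁ × a₂) × n) n ℂ) (hB : B = fun i j => if i = ((z₁, z₂), j) then 1 else 0) :
    M₁ * M₂ ∈ Matrix.unitaryGroup ((a₁ × a₂) × n) ℂ ∧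
    Bᴴ * (M₁ * M₂) * B = A₁ * A₂ := by
  obtain rfl : M₁ = onFstAncilla a₂ U₁ := hM₁
  obtain rfl : M₂ = onSndAncilla a₁ U₂ := hM₂
  obtain rfl : B = ancillaInclusion (z₁, z₂) := hB
  obtain rfl : B₁ = ancillaInclusion z₁ := hB₁
  obtain rfl : B₂ = ancillaInclusion z₂ := hB₂
  refine ⟨mul_mem (onFstAncilla_mem_unitaryGroup hU₁) (onSndAncilla_mem_unitaryGroup hU₂), ?_⟩
  simp only [hA₁, hA₂, conjTranspose_ancillaInclusion_mul_mul_ancillaInclusion]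
  exact onFstAncilla_mul_onSndAncilla_submatrix U₁ U₂ z₁ z₂
end
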